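/- arXiv:2302.09866 — 3 statements merged into one kernel-verified Lean document; each statement's English description precedes it below -/
import Mathlib

section
/- Comparison principle for the discrete reaction–diffusion system: let u, v : [0,∞) → [0,1]^{T_N^d} be differentiable in time, where u is a supersolution (∂_t u(t,i) ≥ 2αN² (Δu(t,·))_i + β(1 − 2u(t,i)) + G(i, u(t,·)) for all t and i) and v is a subsolution (∂_t v(t,i) ≤ 2αN² (Δv(t,·))_i + β(1 − 2v(t,i)) + G(i, v(t,·)) for all t and i). If u(0,i) ≥ v(0,i) for all i ∈ T_N^d, then u(t,i) ≥ v(t,i) for all t ≥ 0 and all i ∈ T_N^d. -/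
open scoped BigOperators
open Finset

noncomputable section

/-- Sites of the discrete torus `T_N^d = (Z/NZ)^d`. -/
abbrev Site (d N : ℕ) := Fin d → ZMod N

/-- Configurations `{0,1}^{T_N^d}`. -/
abbrev Conf (d N : ℕ) := Site d N → Bool

/-- The unit vector `e_k` of the discrete torus. -/
def unitVec (d N : ℕ) (k : Fin d) : Site d N := fun l => if l = k then 1 else 0

/-- The local mean field `ρ_i(η) = K_N⁻¹ Σ_{j ∈ V} η_{i+j}`. -/
def rho (d N : ℕ) (V : Finset (Site d N)) (η : Conf d N) (i : Site d N) : ℝ :=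
  (∑ j ∈ V, if η (i + j) then (1 : ℝ) else 0) / (V.card : ℝ)

/-- `κ_N = min(⌊K_N T⌋ - 1, ⌊K_N (1-T)⌋)`. -/
def kappaN (K : ℕ) (T : ℝ) : ℤ := min (⌊(K : ℝ) * T⌋ - 1) ⌊(K : ℝ) * (1 - T)⌋

/-- Probability of an event `A` under the product Bernoulli measure `υ_u = ⊗_i B(u_i)`. -/
def bprob (d N : ℕ) (u : Site d N → ℝ) (A : Set (Conf d N)) : ℝ :=
  if h : N = 0 then 0 else by
    haveI : NeZero N := ⟨h⟩
    exact ∑ η : Conf d N,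
      (∏ i : Site d N, if η i then u i else 1 - u i) * A.indicator (fun _ => (1 : ℝ)) η

/-- `c_0^+(u) = P_{υ_u}[ρ_0(η) ≥ 1 - κ_N/K_N]`. -/
def cplus (d N : ℕ) (V : Finset (Site d N)) (T : ℝ) (u : Site d N → ℝ) : ℝ :=
  bprob d N u {η | rho d N V η 0 ≥ 1 - (kappaN V.card T : ℝ) / (V.card : ℝ)}

/-- `c_0^-(u) = P_{υ_u}[ρ_0(η) ≤ κ_N/K_N]`. -/
def cminus (d N : ℕ) (V : Finset (Site d N)) (T : ℝ) (u : Site d N → ℝ) : ℝ :=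
  bprob d N u {η | rho d N V η 0 ≤ (kappaN V.card T : ℝ) / (V.card : ℝ)}

/-- The reaction term `G(u) = (1-u_0) c_0^+(u) - u_0 c_0^-(u)`. -/
def Gfun (d N : ℕ) (V : Finset (Site d N)) (T : ℝ) (u : Site d N → ℝ) : ℝ :=
  (1 - u 0) * cplus d N V T u - u 0 * cminus d N V T u

/-- `G(i,u) = G(τ_i u)`. -/
def Gi (d N : ℕ) (V : Finset (Site d N)) (T : ℝ) (i : Site d N) (u : Site d N → ℝ) : ℝ :=
  Gfun d N V T (fun j => u (i + j))

/-- The discrete Laplacian `(Δu)_i = Σ_{j : |i-j|=1} (u_j - u_i)`. -/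
def discLap (d N : ℕ) (u : Site d N → ℝ) (i : Site d N) : ℝ :=
  ∑ k : Fin d, ((u (i + unitVec d N k) - u i) + (u (i - unitVec d N k) - u i))

/-!
Write `F_i(w) = 2αN²(Δw)_i + β(1 - 2w_i) + G(i, w)`. On `[0,1]^{T_N^d}` this right-hand side
satisfies a quantitative Kamke condition: if `w' ≤ w + m` everywhere with equality at `i`, then
`F_i(w') - F_i(w) ≤ L m`. For the Laplacian this is the discrete maximum principle (`L = 0`), for
the flip term `L = -2β`, and for `G` it holds with `L = N^d`: the events defining `c₀^±` are
monotone in `η`, so `c₀^+` increases and `c₀^-` decreases in `u`, and since the product Bernoulli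
law is affine in each `u_j` with slope in `[0, 1]`, both move by at most `∑_j (w'_j - w_j)⁺`.
A first-hitting-time argument for `v - u` against the barrier `ε e^{(L+1)t}` then gives the
comparison.
-/

open Function

section Bernoulli

lemma funSplitAt_symm_false_le {ι : Type*} [DecidableEq ι] (i : ι) (σ : {j // j ≠ i} → Bool) :
    (Equiv.funSplitAt i Bool).symm (false, σ) ≤ (Equiv.funSplitAt i Bool).symm (true, σ) := by
  intro j
  by_cases hj : j = i <;> simp [Equiv.funSplitAt_symm_apply, hj]

variable {ι : Type*} [Fintype ι] [DecidableEq ι]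

def bernoulliWeight (x : ℝ) (b : Bool) : ℝ := if b then x else 1 - x

def bernoulliExpect (p : ι → ℝ) (f : (ι → Bool) → ℝ) : ℝ :=
  ∑ η, (∏ j, bernoulliWeight (p j) (η j)) * f η

lemma bernoulliWeight_nonneg {x : ℝ} (hx : x ∈ Set.Icc 0 1) (b : Bool) :
    0 ≤ bernoulliWeight x b := by
  cases b
  · exact sub_nonneg.2 hx.2
  · exact hx.1

lemma sum_prod_bernoulliWeight (p : ι → ℝ) :
    ∑ η : ι → Bool, ∏ j, bernoulliWeight (p j) (η j) = 1 := by
  rw [← Fintype.prod_sum]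
  simp [bernoulliWeight]

lemma bernoulliExpect_mem_Icc {p : ι → ℝ} (hp : ∀ j, p j ∈ Set.Icc 0 1) {f : (ι → Bool) → ℝ}
    (hf : ∀ η, f η ∈ Set.Icc 0 1) : bernoulliExpect p f ∈ Set.Icc 0 1 := by
  have hw : ∀ η : ι → Bool, 0 ≤ ∏ j, bernoulliWeight (p j) (η j) := fun η =>
    prod_nonneg fun j _ => bernoulliWeight_nonneg (hp j) _
  refine ⟨sum_nonneg fun η _ => mul_nonneg (hw η) (hf η).1, ?_⟩
  calc bernoulliExpect p f ≤ ∑ η : ι → Bool, ∏ j, bernoulliWeight (p j) (η j) :=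
        sum_le_sum fun η _ => mul_le_of_le_one_right (hw η) (hf η).2
    _ = 1 := sum_prod_bernoulliWeight p

lemma bernoulliExpect_sub (p : ι → ℝ) (f g : (ι → Bool) → ℝ) :
    bernoulliExpect p (f - g) = bernoulliExpect p f - bernoulliExpect p g := by
  simp only [bernoulliExpect, Pi.sub_apply, mul_sub, sum_sub_distrib]

lemma bernoulliExpect_neg (p : ι → ℝ) (f : (ι → Bool) → ℝ) :
    bernoulliExpect p (fun η => -f η) = -bernoulliExpect p f := by
  simp only [bernoulliExpect, mul_neg, sum_neg_distrib]

lemma prod_bernoulliWeight_funSplitAt_symm (p : ι → ℝ) (i : ι) (b : Bool)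
    (σ : {j // j ≠ i} → Bool) :
    ∏ j, bernoulliWeight (p j) ((Equiv.funSplitAt i Bool).symm (b, σ) j) =
      bernoulliWeight (p i) b * ∏ j : {j // j ≠ i}, bernoulliWeight (p j) (σ j) := by
  rw [Fintype.prod_eq_mul_prod_subtype_ne _ i]
  congr 1
  · simp [Equiv.funSplitAt_symm_apply]
  · exact prod_congr rfl fun j _ => by rw [Equiv.funSplitAt_symm_apply, dif_neg j.2]

lemma bernoulliExpect_eq_split (p : ι → ℝ) (f : (ι → Bool) → ℝ) (i : ι) :
    bernoulliExpect p f =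
      p i * bernoulliExpect (fun j : {j // j ≠ i} => p j)
          (fun σ => f ((Equiv.funSplitAt i Bool).symm (true, σ))) +
        (1 - p i) * bernoulliExpect (fun j : {j // j ≠ i} => p j)
          (fun σ => f ((Equiv.funSplitAt i Bool).symm (false, σ))) := by
  unfold bernoulliExpect
  rw [← (Equiv.funSplitAt i Bool).symm.sum_comp, Fintype.sum_prod_type, Fintype.sum_bool,
    mul_sum, mul_sum]
  simp only [prod_bernoulliWeight_funSplitAt_symm]
  simp only [bernoulliWeight, if_true, Bool.false_eq_true, if_false, mul_assoc]

variable {f : (ι → Bool) → ℝ} {p q : ι → ℝ}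

/-- `bernoulliExpect p f` is affine in `p i`, with slope in `[0, 1]`. -/
lemma bernoulliExpect_update_sub_mem_Icc (hf : Monotone f) (hf₁ : ∀ η η', f η' - f η ≤ 1)
    (hp : ∀ j, p j ∈ Set.Icc 0 1) (i : ι) {x : ℝ} (hx : p i ≤ x) :
    bernoulliExpect (update p i x) f - bernoulliExpect p f ∈ Set.Icc 0 (x - p i) := by
  set p' : {j // j ≠ i} → ℝ := fun j => p j
  set g : Bool → ({j // j ≠ i} → Bool) → ℝ := fun b σ => f ((Equiv.funSplitAt i Bool).symm (b, σ))
  have hp' : (fun j : {j // j ≠ i} => update p i x j) = p' := funext fun j => update_of_ne j.2 _ _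
  have hslope : bernoulliExpect p' (g true - g false) ∈ Set.Icc 0 1 :=
    bernoulliExpect_mem_Icc (p := p') (fun j => hp j) fun σ =>
      ⟨sub_nonneg.2 (hf (funSplitAt_symm_false_le i σ)), hf₁ _ _⟩
  rw [bernoulliExpect_sub] at hslope
  have hdiff : bernoulliExpect (update p i x) f - bernoulliExpect p f =
      (x - p i) * (bernoulliExpect p' (g true) - bernoulliExpect p' (g false)) := by
    rw [bernoulliExpect_eq_split _ _ i, bernoulliExpect_eq_split p _ i, hp', update_self]
    ring
  rw [hdiff]
  have hx' : 0 ≤ x - p i := sub_nonneg.2 hx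
  exact ⟨mul_nonneg hx' hslope.1, mul_le_of_le_one_right hx' hslope.2⟩

lemma bernoulliExpect_sub_mem_Icc (hf : Monotone f) (hf₁ : ∀ η η', f η' - f η ≤ 1)
    (hp : ∀ j, p j ∈ Set.Icc 0 1) (hq : ∀ j, q j ∈ Set.Icc 0 1) (hpq : p ≤ q) :
    bernoulliExpect q f - bernoulliExpect p f ∈ Set.Icc 0 (∑ j, (q j - p j)) := by
  suffices ∀ s : Finset ι, bernoulliExpect (s.piecewise q p) f - bernoulliExpect p f ∈
      Set.Icc 0 (∑ j ∈ s, (q j - p j)) by simpa using this univ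
  intro s
  induction s using Finset.induction_on with
  | empty => simp
  | insert a s ha ih =>
    have hr : ∀ j, s.piecewise q p j ∈ Set.Icc 0 1 := fun j => by
      by_cases hj : j ∈ s <;> simp [hj, hp j, hq j]
    have hstep := bernoulliExpect_update_sub_mem_Icc hf hf₁ hr a (x := q a)
      (by simpa [ha] using hpq a)
    rw [piecewise_eq_of_notMem _ _ _ ha] at hstep
    rw [piecewise_insert, sum_insert ha]
    constructor <;> linarith [hstep.1, hstep.2, ih.1, ih.2]

theorem bernoulliExpect_le_add_of_monotone (hf : Monotone f) (hf₁ : ∀ η η', f η' - f η ≤ 1)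
    (hp : ∀ j, p j ∈ Set.Icc 0 1) (hq : ∀ j, q j ∈ Set.Icc 0 1) :
    bernoulliExpect q f ≤ bernoulliExpect p f + ∑ j, max (q j - p j) 0 := by
  have hpq : ∀ j, (p ⊔ q) j ∈ Set.Icc 0 1 := fun j =>
    ⟨le_sup_of_le_left (hp j).1, sup_le (hp j).2 (hq j).2⟩
  have hq_le := (bernoulliExpect_sub_mem_Icc hf hf₁ hq hpq le_sup_right).1
  have hp_le := (bernoulliExpect_sub_mem_Icc hf hf₁ hp hpq le_sup_left).2
  have hsum : ∑ j, ((p ⊔ q) j - p j) = ∑ j, max (q j - p j) 0 :=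
    sum_congr rfl fun j _ => by rw [Pi.sup_apply, ← max_sub_sub_right, sub_self, max_comm]
  linarith

theorem sub_le_bernoulliExpect_of_antitone (hf : Antitone f) (hf₁ : ∀ η η', f η' - f η ≤ 1)
    (hp : ∀ j, p j ∈ Set.Icc 0 1) (hq : ∀ j, q j ∈ Set.Icc 0 1) :
    bernoulliExpect p f - ∑ j, max (q j - p j) 0 ≤ bernoulliExpect q f := by
  have := bernoulliExpect_le_add_of_monotone hf.neg (fun η η' => by linarith [hf₁ η' η]) hp hq
  rw [bernoulliExpect_neg, bernoulliExpect_neg] at this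
  linarith

end Bernoulli

lemma indicator_one_sub_indicator_one_le_one {α : Type*} (A : Set α) (x y : α) :
    A.indicator (fun _ => (1 : ℝ)) y - A.indicator (fun _ => 1) x ≤ 1 := by
  have h₀ : 0 ≤ A.indicator (fun _ => (1 : ℝ)) x := Set.indicator_nonneg (fun _ _ => zero_le_one) x
  have h₁ : A.indicator (fun _ => (1 : ℝ)) y ≤ 1 :=
    Set.indicator_le_self' (fun _ _ => zero_le_one) y
  linarith

lemma Monotone.indicator_setOf_ge {α : Type*} [Preorder α] {g : α → ℝ} (hg : Monotone g)
    (c : ℝ) : Monotone ({x | g x ≥ c}.indicator fun _ => (1 : ℝ)) := by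
  intro x y h
  by_cases hx : g x ≥ c
  · rw [Set.indicator_of_mem (show x ∈ {x | g x ≥ c} from hx),
      Set.indicator_of_mem (show y ∈ {x | g x ≥ c} from hx.trans (hg h))]
  · rw [Set.indicator_of_notMem (show x ∉ {x | g x ≥ c} from hx)]
    exact Set.indicator_nonneg (fun _ _ => zero_le_one) y

lemma Monotone.antitone_indicator_setOf_le {α : Type*} [Preorder α] {g : α → ℝ}
    (hg : Monotone g) (c : ℝ) : Antitone ({x | g x ≤ c}.indicator fun _ => (1 : ℝ)) := by
  intro x y h
  by_cases hy : g y ≤ c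
  · rw [Set.indicator_of_mem (show y ∈ {x | g x ≤ c} from hy),
      Set.indicator_of_mem (show x ∈ {x | g x ≤ c} from (hg h).trans hy)]
  · rw [Set.indicator_of_notMem (show y ∉ {x | g x ≤ c} from hy)]
    exact Set.indicator_nonneg (fun _ _ => zero_le_one) x

lemma HasDerivAt.nonneg_of_le_left {f : ℝ → ℝ} {f' a b : ℝ} (hf : HasDerivAt f f' b)
    (hab : a < b) (hle : ∀ s ∈ Set.Ioo a b, f s ≤ f b) : 0 ≤ f' := by
  have hslope := (hasDerivWithinAt_iff_tendsto_slope' (s := Set.Iio b) (lt_irrefl b)).1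
    (hf.hasDerivWithinAt (s := Set.Iio b))
  refine ge_of_tendsto hslope ?_
  filter_upwards [Ioo_mem_nhdsLT hab] with s hs
  rw [slope_def_field]
  exact div_nonneg_of_nonpos (sub_nonpos.2 (hle s hs)) (sub_nonpos.2 hs.2.le)

lemma exists_first_zero {ι : Type*} [Finite ι] {h : ι → ℝ → ℝ}
    (hh : ∀ i, ContinuousOn (h i) (Set.Ici 0)) (h₀ : ∀ i, h i 0 < 0) {t₁ : ℝ} (ht₁ : 0 ≤ t₁)
    {i₁ : ι} (hi₁ : 0 ≤ h i₁ t₁) :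
    ∃ t₀ > 0, ∃ i, h i t₀ = 0 ∧ ∀ j, ∀ s ∈ Set.Icc 0 t₀, h j s ≤ 0 := by
  set A := ⋃ i, Set.Ici 0 ∩ h i ⁻¹' Set.Ici 0
  have hA : IsClosed A := isClosed_iUnion_of_finite fun i =>
    (hh i).preimage_isClosed_of_isClosed isClosed_Ici isClosed_Ici
  have hAbdd : BddBelow A := bddBelow_Ici.mono (Set.iUnion_subset fun _ => Set.inter_subset_left)
  obtain ⟨i, ht₀, hi⟩ :=
    Set.mem_iUnion.1 (hA.csInf_mem ⟨t₁, Set.mem_iUnion.2 ⟨i₁, ht₁, hi₁⟩⟩ hAbdd)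
  set t₀ := sInf A
  have hpos : 0 < t₀ := by
    refine lt_of_le_of_ne ht₀ fun h0 => ?_
    rw [← h0] at hi
    exact (h₀ i).not_ge hi
  have hbefore : ∀ j, ∀ s ∈ Set.Ico 0 t₀, h j s ≤ 0 := fun j s hs =>
    le_of_not_ge fun hjs => notMem_of_lt_csInf hs.2 hAbdd (Set.mem_iUnion.2 ⟨j, hs.1, hjs⟩)
  have hupto : ∀ j, ∀ s ∈ Set.Icc 0 t₀, h j s ≤ 0 := fun j s hs =>
    have hclosed := (hh j).preimage_isClosed_of_isClosed isClosed_Ici (isClosed_Iic (a := 0))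
    (hclosed.closure_subset_iff.2 (fun s hs => ⟨hs.1, hbefore j s hs⟩)
      (by rwa [closure_Ico hpos.ne])).2
  exact ⟨t₀, hpos, i, le_antisymm (hupto i t₀ ⟨ht₀, le_rfl⟩) hi, hupto⟩

section Kamke

variable {ι : Type*}

/-- A quantitative form of Kamke's quasi-monotonicity condition. -/
def QuasimonotoneLipschitzOn (D : Set (ι → ℝ)) (L : ℝ) (F : ι → (ι → ℝ) → ℝ) : Prop :=
  ∀ a ∈ D, ∀ b ∈ D, ∀ (i : ι) (m : ℝ), 0 ≤ m → (∀ j, b j ≤ a j + m) → b i = a i + m →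
    F i b - F i a ≤ L * m

variable {D : Set (ι → ℝ)} {L L' : ℝ} {F G : ι → (ι → ℝ) → ℝ}

lemma QuasimonotoneLipschitzOn.add (hF : QuasimonotoneLipschitzOn D L F)
    (hG : QuasimonotoneLipschitzOn D L' G) :
    QuasimonotoneLipschitzOn D (L + L') fun i w => F i w + G i w := by
  intro a ha b hb i m hm hba hi
  linarith [hF a ha b hb i m hm hba hi, hG a ha b hb i m hm hba hi]

lemma QuasimonotoneLipschitzOn.const_mul (hF : QuasimonotoneLipschitzOn D L F) {c : ℝ}
    (hc : 0 ≤ c) : QuasimonotoneLipschitzOn D (c * L) fun i w => c * F i w := by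
  intro a ha b hb i m hm hba hi
  have := mul_le_mul_of_nonneg_left (hF a ha b hb i m hm hba hi) hc
  linarith

lemma quasimonotoneLipschitzOn_mul_one_sub_two_mul (D : Set (ι → ℝ)) (β : ℝ) :
    QuasimonotoneLipschitzOn D (-2 * β) fun i w => β * (1 - 2 * w i) := by
  intro a _ b _ i m _ _ hi
  simp only [hi]
  linarith

variable [Finite ι] {x y x' y' : ℝ → ι → ℝ}

/-- Strict comparison with a growing margin: at the first time `t₀` at which some `y i - x i`
reaches the margin `m = ε e^{(L+1)t₀}`, it would have to grow at rate at least `(L+1) m`, while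
the Kamke condition allows at most `L m`. -/
lemma sub_lt_mul_exp_of_quasimonotoneLipschitzOn (hF : QuasimonotoneLipschitzOn D L F)
    (hxD : ∀ t, 0 ≤ t → x t ∈ D) (hyD : ∀ t, 0 ≤ t → y t ∈ D)
    (hx : ∀ i, ∀ t, 0 ≤ t → HasDerivAt (fun s => x s i) (x' t i) t)
    (hy : ∀ i, ∀ t, 0 ≤ t → HasDerivAt (fun s => y s i) (y' t i) t)
    (hxF : ∀ t, 0 ≤ t → ∀ i, F i (x t) ≤ x' t i) (hyF : ∀ t, 0 ≤ t → ∀ i, y' t i ≤ F i (y t))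
    (h₀ : ∀ i, y 0 i ≤ x 0 i) {ε : ℝ} (hε : 0 < ε) {t : ℝ} (ht : 0 ≤ t) (i : ι) :
    y t i - x t i < ε * Real.exp ((L + 1) * t) := by
  set g : ι → ℝ → ℝ := fun j s => y s j - x s j - ε * Real.exp ((L + 1) * s)
  have hg : ∀ j, ∀ s, 0 ≤ s → HasDerivAt (g j)
      (y' s j - x' s j - ε * (Real.exp ((L + 1) * s) * ((L + 1) * 1))) s := fun j s hs =>
    ((hy j s hs).sub (hx j s hs)).sub
      (((hasDerivAt_id s).const_mul (L + 1)).exp.const_mul ε)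
  by_contra! hcontra
  obtain ⟨t₀, ht₀, j, hj, hle⟩ := exists_first_zero (h := g)
    (fun j s hs => (hg j s hs).continuousAt.continuousWithinAt)
    (fun j => by simp only [g, mul_zero, Real.exp_zero, mul_one]; linarith [h₀ j]) ht (i₁ := i)
    (by simp only [g]; linarith)
  set m := ε * Real.exp ((L + 1) * t₀)
  have hm : 0 < m := by positivity
  have hgrowth := (hg j t₀ ht₀.le).nonneg_of_le_left ht₀ fun s hs =>
    hj ▸ hle j s ⟨hs.1.le, hs.2.le⟩
  have hkamke := hF (x t₀) (hxD t₀ ht₀.le) (y t₀) (hyD t₀ ht₀.le) j m hm.le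
    (fun k => by linarith [hle k t₀ ⟨ht₀.le, le_rfl⟩]) (by simp only [g] at hj; linarith)
  linarith [hxF t₀ ht₀.le j, hyF t₀ ht₀.le j]

theorem le_of_quasimonotoneLipschitzOn (hF : QuasimonotoneLipschitzOn D L F)
    (hxD : ∀ t, 0 ≤ t → x t ∈ D) (hyD : ∀ t, 0 ≤ t → y t ∈ D)
    (hx : ∀ i, ∀ t, 0 ≤ t → HasDerivAt (fun s => x s i) (x' t i) t)
    (hy : ∀ i, ∀ t, 0 ≤ t → HasDerivAt (fun s => y s i) (y' t i) t)
    (hxF : ∀ t, 0 ≤ t → ∀ i, F i (x t) ≤ x' t i) (hyF : ∀ t, 0 ≤ t → ∀ i, y' t i ≤ F i (y t))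
    (h₀ : ∀ i, y 0 i ≤ x 0 i) : ∀ t, 0 ≤ t → ∀ i, y t i ≤ x t i := by
  intro t ht i
  refine le_of_forall_pos_lt_add fun δ hδ => ?_
  have := sub_lt_mul_exp_of_quasimonotoneLipschitzOn hF hxD hyD hx hy hxF hyF h₀
    (ε := δ * Real.exp (-((L + 1) * t))) (by positivity) ht i
  rw [mul_assoc, ← Real.exp_add, neg_add_cancel, Real.exp_zero, mul_one] at this
  linarith

end Kamke

section Torus

variable {d N : ℕ}

/-- The discrete maximum principle. -/
lemma quasimonotoneLipschitzOn_discLap (D : Set (Site d N → ℝ)) :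
    QuasimonotoneLipschitzOn D 0 fun i w => discLap d N w i := by
  intro a _ b _ i m _ hba hi
  simp only [discLap, ← sum_sub_distrib, zero_mul]
  refine sum_nonpos fun k _ => ?_
  linarith [hba (i + unitVec d N k), hba (i - unitVec d N k)]

variable (V : Finset (Site d N)) (T : ℝ)

lemma monotone_rho (i : Site d N) : Monotone fun η => rho d N V η i := by
  intro η η' h
  refine div_le_div_of_nonneg_right (sum_le_sum fun j _ => ?_) (Nat.cast_nonneg _)
  have hj : η (i + j) → η' (i + j) := Bool.le_iff_imp.1 (h (i + j))
  split_ifs <;> simp_all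

variable [NeZero N]

lemma bprob_eq_bernoulliExpect (u : Site d N → ℝ) (A : Set (Conf d N)) :
    bprob d N u A = bernoulliExpect u (A.indicator fun _ => 1) := by
  simp only [bprob, dif_neg (NeZero.ne N)]
  rfl

lemma cplus_le_add {u v : Site d N → ℝ} (hu : ∀ j, u j ∈ Set.Icc 0 1)
    (hv : ∀ j, v j ∈ Set.Icc 0 1) :
    cplus d N V T v ≤ cplus d N V T u + ∑ j, max (v j - u j) 0 := by
  simp only [cplus, bprob_eq_bernoulliExpect]
  exact bernoulliExpect_le_add_of_monotone ((monotone_rho V 0).indicator_setOf_ge _)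
    (indicator_one_sub_indicator_one_le_one _) hu hv

lemma sub_le_cminus {u v : Site d N → ℝ} (hu : ∀ j, u j ∈ Set.Icc 0 1)
    (hv : ∀ j, v j ∈ Set.Icc 0 1) :
    cminus d N V T u - ∑ j, max (v j - u j) 0 ≤ cminus d N V T v := by
  simp only [cminus, bprob_eq_bernoulliExpect]
  exact sub_le_bernoulliExpect_of_antitone ((monotone_rho V 0).antitone_indicator_setOf_le _)
    (indicator_one_sub_indicator_one_le_one _) hu hv

lemma bprob_nonneg {u : Site d N → ℝ} (hu : ∀ j, u j ∈ Set.Icc 0 1) (A : Set (Conf d N)) :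
    0 ≤ bprob d N u A := by
  rw [bprob_eq_bernoulliExpect]
  exact (bernoulliExpect_mem_Icc hu fun η => ⟨Set.indicator_nonneg (fun _ _ => zero_le_one) η,
    Set.indicator_le_self' (fun _ _ => zero_le_one) η⟩).1

lemma Gfun_sub_le {u v : Site d N → ℝ} (hu : ∀ j, u j ∈ Set.Icc 0 1)
    (hv : ∀ j, v j ∈ Set.Icc 0 1) {m : ℝ} (hm : 0 ≤ m) (hvu : ∀ j, v j ≤ u j + m)
    (hv₀ : v 0 = u 0 + m) :
    Gfun d N V T v - Gfun d N V T u ≤ Fintype.card (Site d N) * m := by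
  set S := ∑ j, max (v j - u j) 0
  have hS : S ≤ Fintype.card (Site d N) * m := by
    calc S ≤ ∑ _j : Site d N, m :=
          sum_le_sum fun j _ => max_le (by linarith [hvu j]) hm
      _ = _ := by rw [sum_const, card_univ, nsmul_eq_mul]
  have hplus : (1 - v 0) * cplus d N V T v ≤ (1 - v 0) * (cplus d N V T u + S) :=
    mul_le_mul_of_nonneg_left (cplus_le_add V T hu hv) (sub_nonneg.2 (hv 0).2)
  have hminus : v 0 * (cminus d N V T u - S) ≤ v 0 * cminus d N V T v :=
    mul_le_mul_of_nonneg_left (sub_le_cminus V T hu hv) (hv 0).1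
  have hplus₀ : 0 ≤ m * cplus d N V T u := mul_nonneg hm (bprob_nonneg hu _)
  have hminus₀ : 0 ≤ m * cminus d N V T u := mul_nonneg hm (bprob_nonneg hu _)
  rw [hv₀] at hplus hminus
  unfold Gfun
  rw [hv₀]
  linarith

lemma quasimonotoneLipschitzOn_Gi :
    QuasimonotoneLipschitzOn {w | ∀ j, w j ∈ Set.Icc 0 1} (Fintype.card (Site d N))
      fun i w => Gi d N V T i w := by
  intro a ha b hb i m hm hba hi
  exact Gfun_sub_le V T (fun j => ha (i + j)) (fun j => hb (i + j)) hm (fun j => hba (i + j))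
    (by simpa using hi)

end Torus

theorem stmt0_general
    (d N : ℕ) (hN : 1 ≤ N)
    (V : Finset (Site d N))
    (T : ℝ)
    (α β : ℝ) (hα : 0 < α)
    (u v : ℝ → Site d N → ℝ)
    (hu01 : ∀ t, 0 ≤ t → ∀ i, u t i ∈ Set.Icc (0 : ℝ) 1)
    (hv01 : ∀ t, 0 ≤ t → ∀ i, v t i ∈ Set.Icc (0 : ℝ) 1)
    (u' v' : ℝ → Site d N → ℝ)
    (hu : ∀ i, ∀ t, 0 ≤ t → HasDerivAt (fun s => u s i) (u' t i) t)
    (hv : ∀ i, ∀ t, 0 ≤ t → HasDerivAt (fun s => v s i) (v' t i) t)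
    (hsuper : ∀ t, 0 ≤ t → ∀ i,
      u' t i ≥ 2 * α * (N : ℝ) ^ 2 * discLap d N (u t) i
        + β * (1 - 2 * u t i) + Gi d N V T i (u t))
    (hsub : ∀ t, 0 ≤ t → ∀ i,
      v' t i ≤ 2 * α * (N : ℝ) ^ 2 * discLap d N (v t) i
        + β * (1 - 2 * v t i) + Gi d N V T i (v t))
    (h0 : ∀ i, v 0 i ≤ u 0 i) :
    ∀ t, 0 ≤ t → ∀ i, v t i ≤ u t i := by
  have : NeZero N := ⟨by omega⟩
  have hF := (((quasimonotoneLipschitzOn_discLap _).const_mul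
    (by positivity : (0 : ℝ) ≤ 2 * α * (N : ℝ) ^ 2)).add
    (quasimonotoneLipschitzOn_mul_one_sub_two_mul _ β)).add (quasimonotoneLipschitzOn_Gi V T)
  exact le_of_quasimonotoneLipschitzOn hF hu01 hv01 hu hv hsuper hsub h0

/-- comparison principle for the discrete reaction–diffusion system:
a supersolution `u` staying above a subsolution `v` at time `0` stays above it forever. -/
theorem stmt0
    (d N : ℕ) (hd : 1 ≤ d) (hN : 1 ≤ N)
    (V : Finset (Site d N)) (hV0 : (0 : Site d N) ∉ V)
    (T : ℝ) (hT : T ∈ Set.Icc (0 : ℝ) 1)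
    (α β : ℝ) (hα : 0 < α) (hβ : 0 < β)
    (u v : ℝ → Site d N → ℝ)
    (hu01 : ∀ t, 0 ≤ t → ∀ i, u t i ∈ Set.Icc (0 : ℝ) 1)
    (hv01 : ∀ t, 0 ≤ t → ∀ i, v t i ∈ Set.Icc (0 : ℝ) 1)
    (u' v' : ℝ → Site d N → ℝ)
    (hu : ∀ i, ∀ t, 0 ≤ t → HasDerivAt (fun s => u s i) (u' t i) t)
    (hv : ∀ i, ∀ t, 0 ≤ t → HasDerivAt (fun s => v s i) (v' t i) t)
    (hsuper : ∀ t, 0 ≤ t → ∀ i,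
      u' t i ≥ 2 * α * (N : ℝ) ^ 2 * discLap d N (u t) i
        + β * (1 - 2 * u t i) + Gi d N V T i (u t))
    (hsub : ∀ t, 0 ≤ t → ∀ i,
      v' t i ≤ 2 * α * (N : ℝ) ^ 2 * discLap d N (v t) i
        + β * (1 - 2 * v t i) + Gi d N V T i (v t))
    (h0 : ∀ i, v 0 i ≤ u 0 i) :
    ∀ t, 0 ≤ t → ∀ i, v t i ≤ u t i :=
  stmt0_general d N hN V T α β hα u v hu01 hv01 u' v' hu hv hsuper hsub h0
end
end

section
/- Non-uniqueness of mild solutions for constant initial data: fix α > 0, β > 0 and ρ ∈ (0, 1/2] with 2ρ < 1/(1+2β), and let v_0(x) = 2ρ for all x ∈ T^d. Then the three functions v¹(t,x) = 2ρ e^{−2βt}, v²(t,x) = 2ρ + (1/(1+2β) − 2ρ)(1 − e^{−(2β+1)t}), and v³(t,x) = 2ρ are pairwise distinct mild solutions (on every [0,τ]) of the subdifferential inclusion ∂_t v − 2αΔv + (2β+1)v ∈ ∂H_∞(v) with initial datum v_0; for v¹ and v² the selection is w = h_∞(v) where h_∞(q) = −1{q ≤ −2ρ} + q·1{−2ρ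 < q ≤ 2ρ} + 1{q > 2ρ}, and for v³ the selection is the constant w = 2ρ(2β+1) ∈ ∂H_∞(2ρ). In particular the subdifferential inclusion admits at least three mild solutions with this initial datum. -/
open MeasureTheory
open scoped BigOperators

noncomputable section

/-- Euclidean space `ℝ^d`; functions on the torus `T^d = (ℝ/ℤ)^d` are modelled as
`ℤ^d`-periodic functions on `ℝ^d`. -/
abbrev Rd (d : ℕ) := EuclideanSpace ℝ (Fin d)

/-- `f` is `ℤ^d`-periodic, i.e. is (the periodic extension of) a function on the torus. -/
def PerZd {d : ℕ} (f : Rd d → ℝ) : Prop :=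
  ∀ (x : Rd d) (m : Fin d → ℤ), f (x + (WithLp.equiv 2 (Fin d → ℝ)).symm (fun k => (m k : ℝ))) = f x

/-- The heat kernel `s_0(t,x,y) = (2πt)^{-d/2} exp(-‖x-y‖²/(2t))` on `ℝ^d`. -/
def heatKer (d : ℕ) (t : ℝ) (x y : Rd d) : ℝ :=
  (2 * Real.pi * t) ^ (-(d : ℝ) / 2) * Real.exp (-‖x - y‖ ^ 2 / (2 * t))

/-- The semigroup `S^{λ,γ}_t f(x) = ∫_{ℝ^d} e^{-λt} s_0(γt,x,y) f̃(y) dy`. -/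
def Sg (d : ℕ) (lam gam : ℝ) (t : ℝ) (f : Rd d → ℝ) (x : Rd d) : ℝ :=
  ∫ y : Rd d, Real.exp (-lam * t) * heatKer d (gam * t) x y * f y

/-- The mild-solution map `v(t,x) = S^{λ,γ}_t v₀(x) + ∫_0^t S^{λ,γ}_{t-s}(g(s,·))(x) ds`. -/
def mild (d : ℕ) (lam gam : ℝ) (v0 : Rd d → ℝ) (g : ℝ → Rd d → ℝ) (t : ℝ) (x : Rd d) : ℝ :=
  Sg d lam gam t v0 x + ∫ s in (0 : ℝ)..t, Sg d lam gam (t - s) (g s) x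


/-- The convex potential `H_∞`. -/
def Hinf (ρ q : ℝ) : ℝ :=
  if q ≤ -(2 * ρ) then -q + 2 * ρ + 2 * ρ ^ 2
  else if q ≤ 2 * ρ then q ^ 2 / 2
  else q - 2 * ρ + 2 * ρ ^ 2

/-- The subdifferential `∂H_∞(q) = {p : H_∞(q') - H_∞(q) ≥ p(q'-q) ∀ q' ∈ [-1,1]}`. -/
def subDiffH (ρ q : ℝ) : Set ℝ :=
  {p | ∀ q' ∈ Set.Icc (-1 : ℝ) 1, Hinf ρ q' - Hinf ρ q ≥ p * (q' - q)}

/-- The measure on `[0,τ] × T^d`, the torus being realised as the fundamental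
domain `[0,1)^d ⊆ ℝ^d`. -/
def QT (d : ℕ) (τ : ℝ) : Measure (ℝ × Rd d) :=
  (volume.restrict (Set.Icc (0 : ℝ) τ)).prod
    (volume.restrict {x : Rd d | ∀ k, x k ∈ Set.Ico (0 : ℝ) 1})

/-- `v` is a mild solution on `[0,τ]` of the subdifferential inclusion
`∂_t v - 2αΔv + (2β+1)v ∈ ∂H_∞(v)` with initial datum `v₀` and selection `w`. -/
def MildWith (d : ℕ) (α β ρ τ : ℝ) (v0 : Rd d → ℝ) (v w : ℝ → Rd d → ℝ) : Prop :=
  Measurable (Function.uncurry w) ∧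
  MemLp (Function.uncurry w) 2 (QT d τ) ∧
  (∀ᵐ p ∂(QT d τ), w p.1 p.2 ∈ subDiffH ρ (v p.1 p.2)) ∧
  ∀ t, 0 < t → t ≤ τ → ∀ x,
    v t x = Sg d (2 * β + 1) (4 * α) t v0 x
      + ∫ s in (0 : ℝ)..t, Sg d (2 * β + 1) (4 * α) (t - s) (w s) x

/-- `v` is a mild solution on `[0,τ]` of the subdifferential inclusion
`∂_t v - 2αΔv + (2β+1)v ∈ ∂H_∞(v)` with initial datum `v₀`. -/
def IsMildSolIncl (d : ℕ) (α β ρ τ : ℝ) (v0 : Rd d → ℝ) (v : ℝ → Rd d → ℝ) : Prop :=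
  ∃ w : ℝ → Rd d → ℝ, MildWith d α β ρ τ v0 v w

/-- The pointwise nonlinearity `h_∞(q) = -1{q ≤ -2ρ} + q·1{-2ρ < q ≤ 2ρ} + 1{q > 2ρ}`. -/
def hinf (ρ q : ℝ) : ℝ :=
  if q ≤ -(2 * ρ) then -1 else if q ≤ 2 * ρ then q else 1

/-!
All three candidates are constant in space. The Gaussian kernel has mass one, so the semigroup
maps a constant `c` to `e^{-λt} c`, and for spatially constant `v` and `w` the mild formulation is
the variation-of-constants formula for the ODE `v' = -(2β+1) v + w`. Each `vⁱ` solves this ODE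
with its selection: `h_∞(v¹) = v¹` since `v¹` stays in `(0, 2ρ]`, `h_∞(v²) = 1` since `v² > 2ρ`
for `t > 0`, and for `v³` the constant `2ρ(2β+1)`. Non-uniqueness comes from the kink of `H_∞`
at `2ρ`: there its subdifferential is the whole interval `[2ρ, 1]`, which contains `2ρ(2β+1)`
because `2ρ < 1/(1+2β)`.
-/

open Real Set

theorem integral_heatKer {d : ℕ} {s : ℝ} (hs : 0 < s) (x : Rd d) :
    ∫ y : Rd d, heatKer d s x y = 1 := by
  have hgauss : ∀ y : Rd d, heatKer d s x y
      = (2 * π * s) ^ (-(d : ℝ) / 2) * exp (-(2 * s)⁻¹ * ‖x - y‖ ^ 2) := fun y => by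
    unfold heatKer
    congr 2
    field_simp
  simp_rw [hgauss]
  rw [integral_const_mul, integral_sub_left_eq_self (fun z : Rd d => exp (-(2 * s)⁻¹ * ‖z‖ ^ 2)),
    GaussianFourier.integral_rexp_neg_mul_sq_norm (by positivity), finrank_euclideanSpace_fin,
    show π / (2 * s)⁻¹ = 2 * π * s by field_simp, ← rpow_add (by positivity), neg_div,
    neg_add_cancel, rpow_zero]

theorem Sg_const {d : ℕ} {lam gam t : ℝ} (h : 0 < gam * t) (c : ℝ) (x : Rd d) :
    Sg d lam gam t (fun _ => c) x = exp (-lam * t) * c := by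
  rw [Sg]
  simp_rw [mul_right_comm _ _ c, integral_const_mul, integral_heatKer h, mul_one]

theorem integral_Sg_const {d : ℕ} {lam gam t : ℝ} (hgam : 0 < gam) (ht : 0 ≤ t) (φ : ℝ → ℝ)
    (x : Rd d) :
    ∫ s in (0 : ℝ)..t, Sg d lam gam (t - s) (fun _ => φ s) x
      = ∫ s in (0 : ℝ)..t, exp (-lam * (t - s)) * φ s := by
  -- the kernel degenerates at `s = t`, so the integrands agree only almost everywhere
  refine intervalIntegral.integral_congr_ae ?_
  filter_upwards [(countable_singleton t).ae_notMem volume] with s hst hs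
  rw [uIoc_of_le ht] at hs
  exact Sg_const (mul_pos hgam (sub_pos.2 (lt_of_le_of_ne hs.2 hst))) _ x

/-- Variation of constants. -/
theorem eq_exp_mul_add_integral_of_hasDerivAt {u φ : ℝ → ℝ} {lam t : ℝ} (ht : 0 ≤ t)
    (hu : ContinuousOn u (Icc 0 t)) (hderiv : ∀ s ∈ Ioo 0 t, HasDerivAt u (-lam * u s + φ s) s)
    (hφ : IntervalIntegrable φ volume 0 t) :
    u t = exp (-lam * t) * u 0 + ∫ s in (0 : ℝ)..t, exp (-lam * (t - s)) * φ s := by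
  have hFTC : ∫ s in (0 : ℝ)..t, exp (lam * s) * φ s = exp (lam * t) * u t - u 0 := by
    rw [intervalIntegral.integral_eq_sub_of_hasDerivAt_of_le ht
      ((continuous_exp.comp (continuous_const_mul lam)).continuousOn.mul hu)
      (fun s hs => ?_) (hφ.continuousOn_mul (by fun_prop))]
    · simp
    · refine (((hasDerivAt_id s).const_mul lam).exp.mul (hderiv s hs)).congr_deriv ?_
      simp only [id]
      ring
  have hsplit : ∀ s, exp (-lam * (t - s)) * φ s = exp (-lam * t) * (exp (lam * s) * φ s) :=
    fun s => by rw [← mul_assoc, ← exp_add]; ring_nf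
  simp_rw [hsplit, intervalIntegral.integral_const_mul, hFTC, mul_sub, ← mul_assoc, ← exp_add]
  simp

theorem isFiniteMeasure_QT (d : ℕ) (τ : ℝ) : IsFiniteMeasure (QT d τ) := by
  have hcube : volume {x : Rd d | ∀ k, x k ∈ Ico (0 : ℝ) 1} ≠ ⊤ := by
    have hpre : {x : Rd d | ∀ k, x k ∈ Ico (0 : ℝ) 1}
        = WithLp.ofLp ⁻¹' univ.pi fun _ => Ico (0 : ℝ) 1 := by
      ext x; simp
    rw [hpre, (PiLp.volume_preserving_ofLp (Fin d)).measure_preimage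
      (MeasurableSet.univ_pi fun _ => measurableSet_Ico).nullMeasurableSet, Real.volume_pi_Ico]
    simp
  have := isFiniteMeasure_restrict.2 hcube
  have := isFiniteMeasure_restrict.2 (measure_Icc_lt_top (μ := volume) (a := (0 : ℝ)) (b := τ)).ne
  unfold QT
  infer_instance

theorem ae_QT_fst_mem_Icc (d : ℕ) (τ : ℝ) : ∀ᵐ p ∂(QT d τ), p.1 ∈ Icc 0 τ :=
  Measure.quasiMeasurePreserving_fst.ae (ae_restrict_mem measurableSet_Icc)

theorem hinf_mem_subDiffH {ρ q : ℝ} (hρ0 : 0 ≤ ρ) (hρ1 : ρ ≤ 1 / 2) (hq : -(2 * ρ) < q) :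
    hinf ρ q ∈ subDiffH ρ q := by
  rintro q' ⟨hq'_lo, hq'_hi⟩
  unfold Hinf hinf
  split_ifs <;>
    nlinarith [sq_nonneg (q - q'), sq_nonneg (q' - 2 * ρ), sq_nonneg (q' + 2 * ρ),
      sq_nonneg (q - 2 * ρ), sq_nonneg (q + 2 * ρ)]

theorem Icc_subset_subDiffH {ρ : ℝ} (hρ : 0 ≤ ρ) : Icc (2 * ρ) 1 ⊆ subDiffH ρ (2 * ρ) := by
  rintro p ⟨hp_lo, hp_hi⟩ q' -
  unfold Hinf
  split_ifs <;> nlinarith [sq_nonneg (q' - 2 * ρ)]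

theorem measurable_hinf (ρ : ℝ) : Measurable (hinf ρ) :=
  Measurable.ite measurableSet_Iic measurable_const
    (Measurable.ite measurableSet_Iic measurable_id measurable_const)

theorem abs_hinf_le {ρ : ℝ} (hρ : ρ ≤ 1 / 2) (q : ℝ) : |hinf ρ q| ≤ 1 := by
  unfold hinf
  split_ifs <;> rw [abs_le] <;> constructor <;> linarith

theorem hinf_of_mem_Ioc {ρ q : ℝ} (hq : q ∈ Ioc (-(2 * ρ)) (2 * ρ)) : hinf ρ q = q := by
  simp [hinf, hq.1.not_ge, hq.2]

theorem hinf_of_lt {ρ q : ℝ} (hρ : 0 ≤ ρ) (hq : 2 * ρ < q) : hinf ρ q = 1 := by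
  simp [hinf, hq.not_ge, show ¬ q ≤ -(2 * ρ) by linarith]

theorem mildWith_of_hasDerivAt {d : ℕ} {α β ρ τ c C : ℝ} {u ψ : ℝ → ℝ} (hα : 0 < α)
    (hψ : Measurable ψ) (hψC : ∀ s, |ψ s| ≤ C) (hsub : ∀ s ∈ Icc 0 τ, ψ s ∈ subDiffH ρ (u s))
    (hu0 : u 0 = c) (hu : ContinuousOn u (Icc 0 τ))
    (hderiv : ∀ s ∈ Ioo 0 τ, HasDerivAt u (-(2 * β + 1) * u s + ψ s) s) :
    MildWith d α β ρ τ (fun _ => c) (fun t _ => u t) (fun t _ => ψ t) := by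
  have := isFiniteMeasure_QT d τ
  refine ⟨hψ.comp measurable_fst, MemLp.of_bound (hψ.comp measurable_fst).aestronglyMeasurable C
    (ae_of_all _ fun p => hψC p.1), ?_, fun t ht htτ x => ?_⟩
  · filter_upwards [ae_QT_fst_mem_Icc d τ] with p hp using hsub p.1 hp
  rw [Sg_const (by positivity) c x, integral_Sg_const (by positivity) ht.le ψ x, ← hu0]
  refine eq_exp_mul_add_integral_of_hasDerivAt ht.le (hu.mono (Icc_subset_Icc_right htτ))
    (fun s hs => hderiv s ⟨hs.1, hs.2.trans_le htτ⟩) ?_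
  exact (intervalIntegrable_const (c := C)).mono_fun hψ.aestronglyMeasurable
    (ae_of_all _ fun s => (hψC s).trans (le_abs_self C))

theorem mildWith_decaying {d : ℕ} {α β ρ : ℝ} (hα : 0 < α) (hβ : 0 ≤ β) (hρ0 : 0 < ρ)
    (hρ1 : ρ ≤ 1 / 2) (τ : ℝ) :
    MildWith d α β ρ τ (fun _ => 2 * ρ) (fun t _ => 2 * ρ * exp (-(2 * β) * t))
      (fun t _ => hinf ρ (2 * ρ * exp (-(2 * β) * t))) := by
  have hrange : ∀ s, 0 ≤ s → 2 * ρ * exp (-(2 * β) * s) ∈ Ioc (-(2 * ρ)) (2 * ρ) := fun s hs =>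
    ⟨by nlinarith [exp_pos (-(2 * β) * s)],
      mul_le_of_le_one_right (by positivity) (exp_le_one_iff.2 (by nlinarith))⟩
  refine mildWith_of_hasDerivAt hα ((measurable_hinf ρ).comp (by fun_prop))
    (fun s => abs_hinf_le hρ1 _) (fun s hs => hinf_mem_subDiffH hρ0.le hρ1 (hrange s hs.1).1)
    (by simp) (by fun_prop) fun s hs => ?_
  refine ((((hasDerivAt_id s).const_mul (-(2 * β))).exp).const_mul (2 * ρ)).congr_deriv ?_
  rw [hinf_of_mem_Ioc (hrange s hs.1.le), id]
  ring

theorem mildWith_increasing {d : ℕ} {α β ρ : ℝ} (hα : 0 < α) (hβ : 0 ≤ β) (hρ0 : 0 < ρ)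
    (hρ1 : ρ ≤ 1 / 2) (hsmall : 2 * ρ < 1 / (1 + 2 * β)) (τ : ℝ) :
    MildWith d α β ρ τ (fun _ => 2 * ρ)
      (fun t _ => 2 * ρ + (1 / (1 + 2 * β) - 2 * ρ) * (1 - exp (-(2 * β + 1) * t)))
      (fun t _ => hinf ρ (2 * ρ + (1 / (1 + 2 * β) - 2 * ρ) * (1 - exp (-(2 * β + 1) * t)))) := by
  have hgap : 0 < 1 / (1 + 2 * β) - 2 * ρ := sub_pos.2 hsmall
  have hrange : ∀ s, 0 ≤ s →
      2 * ρ ≤ 2 * ρ + (1 / (1 + 2 * β) - 2 * ρ) * (1 - exp (-(2 * β + 1) * s)) := fun s hs =>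
    le_add_of_nonneg_right (mul_nonneg hgap.le (sub_nonneg.2 (exp_le_one_iff.2 (by nlinarith))))
  refine mildWith_of_hasDerivAt hα ((measurable_hinf ρ).comp (by fun_prop))
    (fun s => abs_hinf_le hρ1 _)
    (fun s hs => hinf_mem_subDiffH hρ0.le hρ1 (by linarith [hrange s hs.1])) (by simp)
    (by fun_prop) fun s hs => ?_
  have hlt : 2 * ρ < 2 * ρ + (1 / (1 + 2 * β) - 2 * ρ) * (1 - exp (-(2 * β + 1) * s)) :=
    lt_add_of_pos_right _ (mul_pos hgap (sub_pos.2 (exp_lt_one_iff.2 (by nlinarith [hs.1]))))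
  refine ((((hasDerivAt_id s).const_mul (-(2 * β + 1))).exp.const_sub 1).const_mul
    (1 / (1 + 2 * β) - 2 * ρ)).const_add (2 * ρ) |>.congr_deriv ?_
  rw [hinf_of_lt hρ0.le hlt, id]
  field_simp
  ring

theorem mildWith_stationary {d : ℕ} {α β ρ : ℝ} (hα : 0 < α) (hβ : 0 ≤ β) (hρ : 0 ≤ ρ)
    (hsel : 2 * ρ * (2 * β + 1) ≤ 1) (τ : ℝ) :
    MildWith d α β ρ τ (fun _ => 2 * ρ) (fun _ _ => 2 * ρ) (fun _ _ => 2 * ρ * (2 * β + 1)) :=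
  mildWith_of_hasDerivAt (u := fun _ => 2 * ρ) hα measurable_const (fun _ => le_rfl)
    (fun _ _ => Icc_subset_subDiffH hρ ⟨by nlinarith, hsel⟩) rfl continuousOn_const
    fun s _ => (hasDerivAt_const s _).congr_deriv (by ring)

theorem stmt7_general
    (d : ℕ) (α β ρ : ℝ) (hα : 0 < α) (hβ : 0 < β)
    (hρ : ρ ∈ Set.Ioc (0 : ℝ) (1 / 2)) (hsmall : 2 * ρ < 1 / (1 + 2 * β))
    (v0 : Rd d → ℝ) (v1 v2 v3 : ℝ → Rd d → ℝ)
    (hv0 : v0 = fun _ => 2 * ρ)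
    (hv1 : v1 = fun t _ => 2 * ρ * Real.exp (-(2 * β) * t))
    (hv2 : v2 = fun t _ => 2 * ρ + (1 / (1 + 2 * β) - 2 * ρ) * (1 - Real.exp (-(2 * β + 1) * t)))
    (hv3 : v3 = fun _ _ => 2 * ρ) :
    (∀ τ, 0 < τ →
      MildWith d α β ρ τ v0 v1 (fun t x => hinf ρ (v1 t x))) ∧
    (∀ τ, 0 < τ →
      MildWith d α β ρ τ v0 v2 (fun t x => hinf ρ (v2 t x))) ∧
    (∀ τ, 0 < τ →
      MildWith d α β ρ τ v0 v3 (fun _ _ => 2 * ρ * (2 * β + 1))) ∧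
    (2 * ρ * (2 * β + 1) ∈ subDiffH ρ (2 * ρ)) ∧
    v1 ≠ v2 ∧ v1 ≠ v3 ∧ v2 ≠ v3 := by
  obtain ⟨hρ0, hρ1⟩ := hρ
  subst hv0 hv1 hv2 hv3
  have hsel : 2 * ρ * (2 * β + 1) ≤ 1 := by
    rw [lt_div_iff₀ (by positivity)] at hsmall
    linarith
  have hv1_lt : 2 * ρ * exp (-(2 * β) * 1) < 2 * ρ :=
    mul_lt_of_lt_one_right (by positivity) (exp_lt_one_iff.2 (by linarith))
  have hv2_gt : 2 * ρ < 2 * ρ + (1 / (1 + 2 * β) - 2 * ρ) * (1 - exp (-(2 * β + 1) * 1)) :=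
    lt_add_of_pos_right _ (mul_pos (sub_pos.2 hsmall) (sub_pos.2 (exp_lt_one_iff.2 (by linarith))))
  refine ⟨fun τ _ => mildWith_decaying hα hβ.le hρ0 hρ1 τ,
    fun τ _ => mildWith_increasing hα hβ.le hρ0 hρ1 hsmall τ,
    fun τ _ => mildWith_stationary hα hβ.le hρ0.le hsel τ,
    Icc_subset_subDiffH hρ0.le ⟨by nlinarith, hsel⟩,
    fun h => (hv1_lt.trans hv2_gt).ne (congrFun (congrFun h 1) 0),
    fun h => hv1_lt.ne (congrFun (congrFun h 1) 0),
    fun h => hv2_gt.ne' (congrFun (congrFun h 1) 0)⟩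

/-- non-uniqueness of mild solutions of the subdifferential inclusion
for the constant initial datum `v₀ ≡ 2ρ` when `2ρ < 1/(1+2β)`: the three explicit
functions `v¹, v², v³` are pairwise distinct mild solutions (on every `[0,τ]`),
with the indicated selections. -/
theorem stmt7
    (d : ℕ) (hd : 1 ≤ d) (α β ρ : ℝ) (hα : 0 < α) (hβ : 0 < β)
    (hρ : ρ ∈ Set.Ioc (0 : ℝ) (1 / 2)) (hsmall : 2 * ρ < 1 / (1 + 2 * β))
    (v0 : Rd d → ℝ) (v1 v2 v3 : ℝ → Rd d → ℝ)
    (hv0 : v0 = fun _ => 2 * ρ)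
    (hv1 : v1 = fun t _ => 2 * ρ * Real.exp (-(2 * β) * t))
    (hv2 : v2 = fun t _ => 2 * ρ + (1 / (1 + 2 * β) - 2 * ρ) * (1 - Real.exp (-(2 * β + 1) * t)))
    (hv3 : v3 = fun _ _ => 2 * ρ) :
    (∀ τ, 0 < τ →
      MildWith d α β ρ τ v0 v1 (fun t x => hinf ρ (v1 t x))) ∧
    (∀ τ, 0 < τ →
      MildWith d α β ρ τ v0 v2 (fun t x => hinf ρ (v2 t x))) ∧
    (∀ τ, 0 < τ →
      MildWith d α β ρ τ v0 v3 (fun _ _ => 2 * ρ * (2 * β + 1))) ∧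
    (2 * ρ * (2 * β + 1) ∈ subDiffH ρ (2 * ρ)) ∧
    v1 ≠ v2 ∧ v1 ≠ v3 ∧ v2 ≠ v3 :=
  stmt7_general d α β ρ hα hβ hρ hsmall v0 v1 v2 v3 hv0 hv1 hv2 hv3

end
end

section
/- Quantitative convergence of g_K to g_∞: for all K ∈ N* ∪ {∞}, g_K(0) = g_K(1) = 0. For all K ∈ N* and all p ∈ [0,1] with |p − p_0(T)| > 1/K and |(1−p) − p_0(T)| > 1/K, one has |g_K(p) − g_∞(p)| ≤ 2e·exp(−2K(p_0(T) − p)²) + 2e·exp(−2K(p_0(T) − (1−p))²). Moreover, for any 0 < δ < 1/(4e), any T ∈ [4δ, 1−4δ], and any K > |log δ|/(4δ²), one has g_K(2δ) < −δ and g_K(1−2δ) > δ. -/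
/-!
`P_p[X ≤ κ]` and `P_p[X > K - κ]` are binomial tails, and `κ(K,T)` lies within `1` below
`K p₀(T)`, so each indicator in `g_∞` is approached by the corresponding tail at the
Chernoff–Hoeffding rate `exp(-2K(p₀ - p)²)`. In the tail `P_{1-p}[Y ≥ κ]` with `1 - p < p₀` the
rounding of `κ` costs a factor `exp(4a)`, `a = p₀ - (1 - p) ≤ 1/2`: Hoeffding absorbs it into `2e`
when `4a ≤ 1 + log 2`, and otherwise Bennett's bound at `λ = 1 + log 2` (where `e^λ = 2e`) does,
because then `1 - p ≤ 1/2 - a` is small. The sign estimates are the error bound at `p = 2δ` and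
`p = 1 - 2δ`: there `g_∞ = ∓2δ`, both exponentials are below `δ²`, and `4eδ² < δ`.
-/

open scoped BigOperators

noncomputable section

/-- `κ(K,T) = min(⌈KT⌉ - 1, ⌊K(1-T)⌋)`. -/
def kapC (K : ℕ) (T : ℝ) : ℤ := min (⌈(K : ℝ) * T⌉ - 1) ⌊(K : ℝ) * (1 - T)⌋

/-- Binomial cumulative distribution function: `P_p[X ≤ m]` for `X ~ Bin(K,p)`. -/
def bCDF (K : ℕ) (p : ℝ) (m : ℤ) : ℝ :=
  ∑ k ∈ Finset.range (K + 1),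
    if (k : ℤ) ≤ m then (K.choose k : ℝ) * p ^ k * (1 - p) ^ (K - k) else 0

/-- `g_K(p) = (1-p) P_p[X > K - κ(K,T)] - p P_p[X ≤ κ(K,T)]`. -/
def gKfun (K : ℕ) (T : ℝ) (p : ℝ) : ℝ :=
  (1 - p) * (1 - bCDF K p ((K : ℤ) - kapC K T)) - p * bCDF K p (kapC K T)

/-- `g_∞(p) = (1-p)·1{1-p < p₀(T)} - p·1{p ≤ p₀(T)}` with `p₀(T) = min(T,1-T)`. -/
def gInf (T : ℝ) (p : ℝ) : ℝ :=
  (1 - p) * (if 1 - p < min T (1 - T) then 1 else 0)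
    - p * (if p ≤ min T (1 - T) then 1 else 0)

open Finset Real MeasureTheory ProbabilityTheory

section Binomial

variable {K : ℕ} {p : ℝ} {m : ℤ}

lemma sum_choose_mul_pow_mul_one_sub_pow (K : ℕ) (p : ℝ) :
    ∑ k ∈ range (K + 1), (K.choose k : ℝ) * p ^ k * (1 - p) ^ (K - k) = 1 := by
  have h := add_pow p (1 - p) K
  rw [add_sub_cancel, one_pow] at h
  exact (sum_congr rfl fun k _ => by ring).trans h.symm

lemma one_sub_bCDF (K : ℕ) (p : ℝ) (m : ℤ) :
    1 - bCDF K p m = ∑ k ∈ range (K + 1),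
      if m < (k : ℤ) then (K.choose k : ℝ) * p ^ k * (1 - p) ^ (K - k) else 0 := by
  rw [sub_eq_iff_eq_add', bCDF, ← sum_add_distrib]
  refine (sum_choose_mul_pow_mul_one_sub_pow K p).symm.trans (sum_congr rfl fun k _ => ?_)
  by_cases h : (k : ℤ) ≤ m
  · simp [h, not_lt.mpr h]
  · simp [h, not_le.mp h]

lemma bCDF_nonneg (hp0 : 0 ≤ p) (hp1 : p ≤ 1) : 0 ≤ bCDF K p m :=
  sum_nonneg fun k _ => by
    have : 0 ≤ 1 - p := by linarith
    split_ifs <;> positivity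

lemma bCDF_le_one (hp0 : 0 ≤ p) (hp1 : p ≤ 1) : bCDF K p m ≤ 1 := by
  have : 0 ≤ 1 - bCDF K p m := by
    rw [one_sub_bCDF]
    refine sum_nonneg fun k _ => ?_
    have : 0 ≤ 1 - p := by linarith
    split_ifs <;> positivity
  linarith

lemma bCDF_one_sub (K : ℕ) (p : ℝ) (m : ℤ) :
    bCDF K (1 - p) m = 1 - bCDF K p (K - m - 1) := by
  rw [one_sub_bCDF, bCDF, ← sum_range_reflect]
  refine sum_congr rfl fun k hk => ?_
  have hkK : k ≤ K := Nat.lt_succ_iff.mp (mem_range.mp hk)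
  rw [Nat.add_sub_cancel, Nat.choose_symm hkK, Nat.sub_sub_self hkK, sub_sub_cancel, mul_right_comm]
  congr 1
  push_cast [hkK]
  apply propext
  omega

lemma bCDF_zero (hm : 0 ≤ m) : bCDF K 0 m = 1 := by
  rw [bCDF, sum_eq_single_of_mem 0 (by simp)]
  · simp [hm]
  · intro k _ hk
    simp [zero_pow hk]

lemma bCDF_one (hm : m < K) : bCDF K 1 m = 0 := by
  rw [← sub_zero 1, bCDF_one_sub, bCDF_zero (by omega), sub_self]

lemma one_sub_bCDF_le_exp_mul_pow (hp0 : 0 ≤ p) (hp1 : p ≤ 1) {l : ℝ} (hl : 0 ≤ l) :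
    1 - bCDF K p m ≤ exp (-(l * (m + 1))) * (1 - p + p * exp l) ^ K := by
  have hq : 0 ≤ 1 - p := by linarith
  calc 1 - bCDF K p m
      ≤ ∑ k ∈ range (K + 1),
          exp (l * (k - (m + 1))) * ((K.choose k : ℝ) * p ^ k * (1 - p) ^ (K - k)) := by
        rw [one_sub_bCDF]
        refine sum_le_sum fun k _ => ?_
        split_ifs with h
        · refine le_mul_of_one_le_left (by positivity) (one_le_exp (mul_nonneg hl ?_))
          have : (m : ℝ) + 1 ≤ k := by exact_mod_cast h
          linarith
        · positivity
    _ = exp (-(l * (m + 1))) * (p * exp l + (1 - p)) ^ K := by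
        rw [add_pow, mul_sum]
        refine sum_congr rfl fun k _ => ?_
        rw [mul_sub, exp_sub, mul_pow, ← exp_nat_mul, div_eq_mul_inv, ← exp_neg, mul_comm (k : ℝ)]
        ring
    _ = _ := by rw [add_comm (p * exp l)]

lemma one_sub_add_mul_exp_le (hp0 : 0 ≤ p) (hp1 : p ≤ 1) (l : ℝ) :
    1 - p + p * exp l ≤ exp (p * l + l ^ 2 / 8) := by
  let X : Bool → ℝ := fun b => if b then 1 else 0
  let μ := bernoulliMeasure true false ⟨p, hp0, hp1⟩
  have hmean : ∫ b, X b ∂μ = p := by simp [μ, X, integral_bernoulliMeasure]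
  have h := (hasSubgaussianMGF_of_mem_Icc (μ := μ) (a := 0) (b := 1)
    (measurable_of_finite X).aemeasurable
    (ae_of_all _ fun b => by cases b <;> simp [X])).mgf_le l
  rw [mgf, hmean, integral_bernoulliMeasure] at h
  norm_num [X] at h
  have hcancel : exp (p * l) * exp (-(p * l)) = 1 := by rw [← exp_add]; simp
  calc 1 - p + p * exp l
      = exp (p * l) * (p * exp (l * (1 - p)) + (1 - p) * exp (-(l * p))) := by
        rw [show l * (1 - p) = -(p * l) + l by ring, exp_add, mul_comm l p]
        linear_combination (-(1 - p) - p * exp l) * hcancel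
    _ ≤ exp (p * l) * exp (1 / 4 * l ^ 2 / 2) := by gcongr
    _ = exp (p * l + l ^ 2 / 8) := by rw [← exp_add]; ring_nf

lemma one_sub_bCDF_le_hoeffding (hp0 : 0 ≤ p) (hp1 : p ≤ 1) {a s : ℝ} (ha : 0 ≤ a)
    (hm : K * (p + a) ≤ m + 1 + s) :
    1 - bCDF K p m ≤ exp (4 * a * s) * exp (-(2 * K * a ^ 2)) := by
  have hl : 0 ≤ 4 * a := by positivity
  calc 1 - bCDF K p m ≤ exp (-(4 * a * (m + 1))) * (1 - p + p * exp (4 * a)) ^ K :=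
        one_sub_bCDF_le_exp_mul_pow hp0 hp1 hl
    _ ≤ exp (-(4 * a * (m + 1))) * exp (p * (4 * a) + (4 * a) ^ 2 / 8) ^ K := by
        have : 0 ≤ 1 - p + p * exp (4 * a) := by nlinarith [exp_pos (4 * a)]
        gcongr
        exact one_sub_add_mul_exp_le hp0 hp1 _
    _ = exp (-(4 * a * (m + 1)) + K * (p * (4 * a) + (4 * a) ^ 2 / 8)) := by
        rw [← exp_nat_mul, ← exp_add]
    _ ≤ exp (4 * a * s + -(2 * K * a ^ 2)) := by
        apply exp_le_exp.mpr
        nlinarith [mul_le_mul_of_nonneg_left hm hl]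
    _ = _ := exp_add _ _

lemma one_sub_bCDF_le_exp (hp0 : 0 ≤ p) (hp1 : p ≤ 1) {a : ℝ} (ha : 0 ≤ a)
    (hm : K * (p + a) ≤ m + 1) :
    1 - bCDF K p m ≤ exp (-(2 * K * a ^ 2)) := by
  simpa using one_sub_bCDF_le_hoeffding hp0 hp1 ha (s := 0) (by simpa using hm)

lemma bCDF_le_exp (hp0 : 0 ≤ p) (hp1 : p ≤ 1) {a : ℝ} (ha : 0 ≤ a)
    (hm : m + K * a ≤ K * p) :
    bCDF K p m ≤ exp (-(2 * K * a ^ 2)) := by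
  rw [← sub_sub_cancel 1 p, bCDF_one_sub]
  exact one_sub_bCDF_le_exp (by linarith) (by linarith) ha (by push_cast; linarith)

lemma one_sub_bCDF_le_bennett (hp0 : 0 ≤ p) (hp1 : p ≤ 1) {l : ℝ} (hl : 0 ≤ l) :
    1 - bCDF K p m ≤ exp (-(l * (m + 1)) + K * (p * (exp l - 1))) := by
  calc 1 - bCDF K p m ≤ exp (-(l * (m + 1))) * (1 - p + p * exp l) ^ K :=
        one_sub_bCDF_le_exp_mul_pow hp0 hp1 hl
    _ ≤ exp (-(l * (m + 1))) * exp (p * (exp l - 1)) ^ K := by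
        have : 0 ≤ 1 - p + p * exp l := by nlinarith [exp_pos l]
        gcongr
        linarith [add_one_le_exp (p * (exp l - 1))]
    _ = _ := by rw [← exp_nat_mul, ← exp_add]

lemma bennett_exponent_nonpos {q a : ℝ} (hq : 0 ≤ q) (ha : (1 + log 2) / 4 ≤ a)
    (hqa : q + a ≤ 1 / 2) :
    q * (2 * exp 1 - 1) - (1 + log 2) * (q + a) + 2 * a ^ 2 ≤ 0 := by
  have := exp_one_gt_d9
  have := exp_one_lt_d9
  have := log_two_lt_d9
  have := log_two_gt_d9
  nlinarith [mul_nonneg (by linarith : (0 : ℝ) ≤ 1 / 2 - a) (by linarith : 0 ≤ a - (1 + log 2) / 4),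
    mul_nonneg (by linarith : (0 : ℝ) ≤ 1 / 2 - a - q) (by linarith : 0 ≤ 2 * exp 1 - 2 - log 2)]

lemma one_sub_bCDF_le_two_mul_exp_one (hp0 : 0 ≤ p) (hp1 : p ≤ 1) {a : ℝ} (ha : 0 ≤ a)
    (hpa : p + a ≤ 1 / 2) (hm : K * (p + a) ≤ m + 2) :
    1 - bCDF K p m ≤ 2 * exp 1 * exp (-(2 * K * a ^ 2)) := by
  have hc : exp (1 + log 2) = 2 * exp 1 := by rw [exp_add, exp_log two_pos, mul_comm]
  have hc0 : 0 ≤ 1 + log 2 := by linarith [log_nonneg one_le_two]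
  rcases le_total (4 * a) (1 + log 2) with hsmall | hlarge
  · calc 1 - bCDF K p m ≤ exp (4 * a * 1) * exp (-(2 * K * a ^ 2)) :=
          one_sub_bCDF_le_hoeffding hp0 hp1 ha (by linarith)
      _ ≤ 2 * exp 1 * exp (-(2 * K * a ^ 2)) := by
          rw [← hc]
          gcongr
          linarith
  · calc 1 - bCDF K p m ≤ exp (-((1 + log 2) * (m + 1)) + K * (p * (exp (1 + log 2) - 1))) :=
          one_sub_bCDF_le_bennett hp0 hp1 hc0
      _ ≤ exp ((1 + log 2) + -(2 * K * a ^ 2)) := by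
          have := mul_nonpos_of_nonneg_of_nonpos (Nat.cast_nonneg (α := ℝ) K)
            (bennett_exponent_nonpos hp0 (by linarith) hpa)
          apply exp_le_exp.mpr
          rw [hc]
          nlinarith [mul_le_mul_of_nonneg_left hm hc0]
      _ = 2 * exp 1 * exp (-(2 * K * a ^ 2)) := by rw [exp_add, hc]

end Binomial

lemma min_one_sub_le_half (T : ℝ) : min T (1 - T) ≤ 1 / 2 := by
  linarith [min_le_left T (1 - T), min_le_right T (1 - T)]

section Kappa

variable (K : ℕ) (T : ℝ)

lemma kapC_le_mul_min : (kapC K T : ℝ) ≤ K * min T (1 - T) := by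
  rcases le_total T (1 - T) with h | h
  · rw [min_eq_left h]
    have : (kapC K T : ℝ) ≤ ⌈(K : ℝ) * T⌉ - 1 := by exact_mod_cast min_le_left _ _
    linarith [Int.ceil_lt_add_one ((K : ℝ) * T)]
  · rw [min_eq_right h]
    have : (kapC K T : ℝ) ≤ ⌊(K : ℝ) * (1 - T)⌋ := by exact_mod_cast min_le_right _ _
    linarith [Int.floor_le ((K : ℝ) * (1 - T))]

lemma mul_min_sub_one_le_kapC : K * min T (1 - T) - 1 ≤ (kapC K T : ℝ) := by
  have hK : (0 : ℝ) ≤ K := K.cast_nonneg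
  rw [kapC, Int.cast_min, le_min_iff]
  push_cast
  constructor
  · nlinarith [Int.le_ceil ((K : ℝ) * T), min_le_left T (1 - T)]
  · nlinarith [Int.sub_one_lt_floor ((K : ℝ) * (1 - T)), min_le_right T (1 - T)]

lemma kapC_lt : kapC K T < K := by
  have h1 : (kapC K T : ℝ) < K * T := by
    have : (kapC K T : ℝ) ≤ ⌈(K : ℝ) * T⌉ - 1 := by exact_mod_cast min_le_left _ _
    linarith [Int.ceil_lt_add_one ((K : ℝ) * T)]
  have h2 : (kapC K T : ℝ) ≤ K * (1 - T) := by
    have : (kapC K T : ℝ) ≤ ⌊(K : ℝ) * (1 - T)⌋ := by exact_mod_cast min_le_right _ _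
    linarith [Int.floor_le ((K : ℝ) * (1 - T))]
  by_contra! h
  have : (K : ℝ) ≤ kapC K T := by exact_mod_cast h
  nlinarith [K.cast_nonneg (α := ℝ)]

end Kappa

section Limit

variable (K : ℕ) (T : ℝ)

lemma gKfun_zero : gKfun K T 0 = 0 := by
  rw [gKfun, bCDF_zero (by linarith [kapC_lt K T])]
  ring

lemma gKfun_one : gKfun K T 1 = 0 := by
  rw [gKfun, bCDF_one (kapC_lt K T)]
  ring

lemma gInf_zero : gInf T 0 = 0 := by
  have := min_one_sub_le_half T
  rw [gInf, if_neg (by linarith)]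
  ring

lemma gInf_one : gInf T 1 = 0 := by
  have := min_one_sub_le_half T
  rw [gInf, if_neg (show ¬(1 : ℝ) ≤ min T (1 - T) by linarith)]
  ring

end Limit

section Convergence

variable {K : ℕ}

lemma abs_bCDF_sub_indicator_le {p p₀ : ℝ} {m : ℤ} (hp : p ∈ Set.Icc (0 : ℝ) 1)
    (hm₁ : K * p₀ - 1 ≤ m) (hm₂ : m ≤ K * p₀) :
    |bCDF K p m - if p ≤ p₀ then 1 else 0| ≤ exp (-(2 * K * (p₀ - p) ^ 2)) := by
  obtain ⟨hp0, hp1⟩ := hp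
  split_ifs with h
  · rw [abs_sub_comm, abs_of_nonneg (by linarith [bCDF_le_one (K := K) (m := m) hp0 hp1])]
    exact one_sub_bCDF_le_exp hp0 hp1 (by linarith) (by linarith)
  · rw [sub_zero, abs_of_nonneg (bCDF_nonneg hp0 hp1), sub_sq_comm]
    exact bCDF_le_exp hp0 hp1 (by linarith) (by linarith)

lemma abs_bCDF_pred_sub_indicator_le {q p₀ : ℝ} {m : ℤ} (hq : q ∈ Set.Icc (0 : ℝ) 1)
    (hp₀ : p₀ ≤ 1 / 2) (hm₁ : K * p₀ - 1 ≤ m) (hm₂ : m ≤ K * p₀) :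
    |bCDF K q (m - 1) - if q < p₀ then 1 else 0|
      ≤ 2 * exp 1 * exp (-(2 * K * (p₀ - q) ^ 2)) := by
  obtain ⟨hq0, hq1⟩ := hq
  split_ifs with h
  · rw [abs_sub_comm, abs_of_nonneg (by linarith [bCDF_le_one (K := K) (m := m - 1) hq0 hq1])]
    exact one_sub_bCDF_le_two_mul_exp_one hq0 hq1 (by linarith) (by linarith)
      (by push_cast; linarith)
  · rw [sub_zero, abs_of_nonneg (bCDF_nonneg hq0 hq1), sub_sq_comm]
    calc bCDF K q (m - 1) ≤ exp (-(2 * K * (q - p₀) ^ 2)) :=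
          bCDF_le_exp hq0 hq1 (by linarith) (by push_cast; linarith)
      _ ≤ 2 * exp 1 * exp (-(2 * K * (q - p₀) ^ 2)) :=
          le_mul_of_one_le_left (exp_pos _).le (by linarith [add_one_le_exp 1])

variable (K) (T : ℝ) {p : ℝ}

lemma abs_gKfun_sub_gInf_le (hp : p ∈ Set.Icc (0 : ℝ) 1) :
    |gKfun K T p - gInf T p|
      ≤ 2 * exp 1 * exp (-(2 * K * (min T (1 - T) - p) ^ 2))
        + 2 * exp 1 * exp (-(2 * K * (min T (1 - T) - (1 - p)) ^ 2)) := by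
  have hm₁ := mul_min_sub_one_le_kapC K T
  have hm₂ := kapC_le_mul_min K T
  have hq : 1 - p ∈ Set.Icc (0 : ℝ) 1 := ⟨by linarith [hp.2], by linarith [hp.1]⟩
  have hB := abs_bCDF_sub_indicator_le hp hm₁ hm₂
  have hA := abs_bCDF_pred_sub_indicator_le hq (min_one_sub_le_half T) hm₁ hm₂
  have hsplit : gKfun K T p - gInf T p
      = (1 - p) * (bCDF K (1 - p) (kapC K T - 1) - if 1 - p < min T (1 - T) then 1 else 0)
        - p * (bCDF K p (kapC K T) - if p ≤ min T (1 - T) then 1 else 0) := by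
    rw [gKfun, gInf, bCDF_one_sub, show (K : ℤ) - (kapC K T - 1) - 1 = K - kapC K T by ring]
    ring
  have h2e : 1 ≤ 2 * exp 1 := by linarith [add_one_le_exp 1]
  have hB' := hB.trans (le_mul_of_one_le_left (exp_pos _).le h2e)
  rw [hsplit]
  refine (abs_sub _ _).trans ?_
  rw [abs_mul, abs_mul, abs_of_nonneg hq.1, abs_of_nonneg hp.1]
  calc _ ≤ |bCDF K (1 - p) (kapC K T - 1) - if 1 - p < min T (1 - T) then 1 else 0|
        + |bCDF K p (kapC K T) - if p ≤ min T (1 - T) then 1 else 0| :=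
        add_le_add (mul_le_of_le_one_left (abs_nonneg _) hq.2)
          (mul_le_of_le_one_left (abs_nonneg _) hp.2)
    _ ≤ _ := by linarith

end Convergence

section SignEstimates

variable {K : ℕ} {T δ : ℝ}

lemma exp_neg_two_mul_sq_lt (hδ : 0 < δ) (hK : |log δ| / (4 * δ ^ 2) < K) {d : ℝ}
    (hd : 2 * δ ≤ |d|) :
    exp (-(2 * K * d ^ 2)) < δ ^ 2 := by
  have hlog : -log δ < 4 * K * δ ^ 2 := by
    rw [div_lt_iff₀ (by positivity)] at hK
    linarith [neg_le_abs (log δ)]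
  have hd2 : (2 * δ) ^ 2 ≤ d ^ 2 := sq_abs d ▸ pow_le_pow_left₀ (by positivity) hd 2
  calc exp (-(2 * K * d ^ 2)) < exp (2 * log δ) := by
        apply exp_lt_exp.mpr
        nlinarith [K.cast_nonneg (α := ℝ)]
    _ = δ ^ 2 := by rw [← log_rpow hδ, exp_log (by positivity)]; norm_cast

lemma abs_gKfun_sub_gInf_lt (hδ : 0 < δ) (hK : |log δ| / (4 * δ ^ 2) < K) {p : ℝ}
    (hp : p ∈ Set.Icc (0 : ℝ) 1) (h₁ : 2 * δ ≤ |min T (1 - T) - p|)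
    (h₂ : 2 * δ ≤ |min T (1 - T) - (1 - p)|) :
    |gKfun K T p - gInf T p| < 4 * exp 1 * δ ^ 2 := by
  have h2e : 0 < 2 * exp 1 := by positivity
  calc |gKfun K T p - gInf T p| ≤ _ := abs_gKfun_sub_gInf_le K T hp
    _ < 2 * exp 1 * δ ^ 2 + 2 * exp 1 * δ ^ 2 :=
        add_lt_add (mul_lt_mul_of_pos_left (exp_neg_two_mul_sq_lt hδ hK h₁) h2e)
          (mul_lt_mul_of_pos_left (exp_neg_two_mul_sq_lt hδ hK h₂) h2e)
    _ = 4 * exp 1 * δ ^ 2 := by ring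

lemma gKfun_two_mul_lt (hδ : 0 < δ) (hδe : 4 * exp 1 * δ < 1) (hp₀ : 4 * δ ≤ min T (1 - T))
    (hK : |log δ| / (4 * δ ^ 2) < K) :
    gKfun K T (2 * δ) < -δ := by
  have := min_one_sub_le_half T
  have hg : gInf T (2 * δ) = -(2 * δ) := by
    rw [gInf, if_neg (by linarith), if_pos (by linarith)]
    ring
  have := abs_gKfun_sub_gInf_lt hδ hK (p := 2 * δ) ⟨by linarith, by linarith⟩
    (by rw [abs_of_nonneg (by linarith)]; linarith)
    (by rw [abs_of_nonpos (by linarith)]; linarith)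
  rw [hg] at this
  nlinarith [abs_lt.mp this]

lemma gKfun_one_sub_two_mul_gt (hδ : 0 < δ) (hδe : 4 * exp 1 * δ < 1)
    (hp₀ : 4 * δ ≤ min T (1 - T)) (hK : |log δ| / (4 * δ ^ 2) < K) :
    δ < gKfun K T (1 - 2 * δ) := by
  have := min_one_sub_le_half T
  have hg : gInf T (1 - 2 * δ) = 2 * δ := by
    rw [gInf, if_pos (by linarith), if_neg (by linarith)]
    ring
  have := abs_gKfun_sub_gInf_lt hδ hK (p := 1 - 2 * δ) ⟨by linarith, by linarith⟩
    (by rw [abs_of_nonpos (by linarith)]; linarith)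
    (by rw [abs_of_nonneg (by linarith)]; linarith)
  rw [hg] at this
  nlinarith [abs_lt.mp this]

end SignEstimates

theorem stmt13_general (T : ℝ) :
    (∀ K : ℕ, 1 ≤ K → gKfun K T 0 = 0 ∧ gKfun K T 1 = 0) ∧
    (gInf T 0 = 0 ∧ gInf T 1 = 0) ∧
    (∀ K : ℕ, 1 ≤ K → ∀ p ∈ Set.Icc (0 : ℝ) 1,
      |p - min T (1 - T)| > 1 / K → |(1 - p) - min T (1 - T)| > 1 / K →
      |gKfun K T p - gInf T p|
        ≤ 2 * Real.exp 1 * Real.exp (-(2 * K * (min T (1 - T) - p) ^ 2))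
          + 2 * Real.exp 1 * Real.exp (-(2 * K * (min T (1 - T) - (1 - p)) ^ 2))) ∧
    (∀ δ : ℝ, 0 < δ → δ < 1 / (4 * Real.exp 1) →
      4 * δ ≤ T → T ≤ 1 - 4 * δ →
      ∀ K : ℕ, (K : ℝ) > |Real.log δ| / (4 * δ ^ 2) →
        gKfun K T (2 * δ) < -δ ∧ gKfun K T (1 - 2 * δ) > δ) := by
  refine ⟨fun K _ => ⟨gKfun_zero K T, gKfun_one K T⟩, ⟨gInf_zero T, gInf_one T⟩,
    fun K _ p hp _ _ => abs_gKfun_sub_gInf_le K T hp, ?_⟩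
  intro δ hδ hδe hT₁ hT₂ K hK
  have hδe' : 4 * exp 1 * δ < 1 := by rwa [lt_div_iff₀ (by positivity), mul_comm] at hδe
  have hp₀ : 4 * δ ≤ min T (1 - T) := le_min hT₁ (by linarith)
  exact ⟨gKfun_two_mul_lt hδ hδe' hp₀ hK, gKfun_one_sub_two_mul_gt hδ hδe' hp₀ hK⟩

/-- quantitative convergence of `g_K` to `g_∞`: vanishing at `0` and `1`,
the Gaussian-tail error bound away from the discontinuities, and the sign estimates
`g_K(2δ) < -δ`, `g_K(1-2δ) > δ` for small `δ` and large `K`. -/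
theorem stmt13 (T : ℝ) (hT : T ∈ Set.Icc (0 : ℝ) 1) :
    (∀ K : ℕ, 1 ≤ K → gKfun K T 0 = 0 ∧ gKfun K T 1 = 0) ∧
    (gInf T 0 = 0 ∧ gInf T 1 = 0) ∧
    (∀ K : ℕ, 1 ≤ K → ∀ p ∈ Set.Icc (0 : ℝ) 1,
      |p - min T (1 - T)| > 1 / K → |(1 - p) - min T (1 - T)| > 1 / K →
      |gKfun K T p - gInf T p|
        ≤ 2 * Real.exp 1 * Real.exp (-(2 * K * (min T (1 - T) - p) ^ 2))
          + 2 * Real.exp 1 * Real.exp (-(2 * K * (min T (1 - T) - (1 - p)) ^ 2))) ∧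
    (∀ δ : ℝ, 0 < δ → δ < 1 / (4 * Real.exp 1) →
      4 * δ ≤ T → T ≤ 1 - 4 * δ →
      ∀ K : ℕ, (K : ℝ) > |Real.log δ| / (4 * δ ^ 2) →
        gKfun K T (2 * δ) < -δ ∧ gKfun K T (1 - 2 * δ) > δ) :=
  stmt13_general T

end
end
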